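/- arXiv:0906.4509 — 2 statements merged into one kernel-verified Lean document; each statement's English description precedes it below -/
import Mathlib

section
/- Let W₁ ∈ 𝒜 (an (e+1)-dimensional subspace of V not contained in H) and W₂ ∈ ℬ (an (e−1)-dimensional subspace of H), and set f(W₁) = [σ(W₁∩H) ∪ (W₁∖H)] and f(W₂) = [σ(W₂)]. Then |f(W₁) ∩ f(W₂)| = (q^{dim(W₁∩W₂)+1} − 1)/(q − 1). Consequently |f(W₁) ∩ f(W₂)| = (q^e − 1)/(q − 1) if and only if W₁ ⊇ W₂. -/
/-- The set of projective points (1-dimensional subspaces) contained in a subset `S` of `V`. -/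
def projPts (K : Type*) {V : Type*} [Field K] [AddCommGroup V] [Module K V]
    (S : Set V) : Set (Submodule K V) :=
  {P | Module.finrank K P = 1 ∧ (P : Set V) ⊆ S}

/-- `𝒜`: the (e+1)-dimensional subspaces of `V` not contained in `H`. -/
def setA {K V : Type*} [Field K] [AddCommGroup V] [Module K V]
    (e : ℕ) (H : Submodule K V) : Set (Submodule K V) :=
  {W | Module.finrank K W = e + 1 ∧ ¬ W ≤ H}

/-- `ℬ`: the (e-1)-dimensional subspaces of `H`. -/
def setB {K V : Type*} [Field K] [AddCommGroup V] [Module K V]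
    (e : ℕ) (H : Submodule K V) : Set (Submodule K V) :=
  {W | Module.finrank K W = e - 1 ∧ W ≤ H}

/-- The block `[σ(W ∩ H) ∪ (W \ H)]` associated to `W ∈ 𝒜`. -/
def blockA {K V : Type*} [Field K] [AddCommGroup V] [Module K V]
    (σ : Submodule K V → Submodule K V) (H W : Submodule K V) : Set (Submodule K V) :=
  projPts K ((σ (W ⊓ H) : Set V) ∪ ((W : Set V) \ (H : Set V)))

/-- The block `[σ(W)]` associated to `W ∈ ℬ`. -/
def blockB {K V : Type*} [Field K] [AddCommGroup V] [Module K V]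
    (σ : Submodule K V → Submodule K V) (W : Submodule K V) : Set (Submodule K V) :=
  projPts K (σ W : Set V)

/-- The block set `𝒜' ∪ ℬ'` of the Jungnickel–Tonchev design. -/
def blocksJT {K V : Type*} [Field K] [AddCommGroup V] [Module K V]
    (e : ℕ) (σ : Submodule K V → Submodule K V) (H : Submodule K V) :
    Set (Set (Submodule K V)) :=
  (blockA σ H '' setA e H) ∪
    {B | ∃ W : Submodule K V, Module.finrank K W = e + 1 ∧ W ≤ H ∧ B = projPts K (W : Set V)}

/-! Since `σ(W₂) ⊆ H`, the affine part `W₁ \ H` of `f(W₁)` misses `f(W₂)`, so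
`f(W₁) ∩ f(W₂)` is the set of points of `σ(W₁ ∩ H) ∩ σ(W₂) = σ((W₁ ∩ H) + W₂)`. As `W₁` meets the
hyperplane `H` in dimension `e` and `(W₁ ∩ H) ∩ W₂ = W₁ ∩ W₂`, the sum `(W₁ ∩ H) + W₂` has dimension
`2e - 1 - dim (W₁ ∩ W₂)`, so its polar has dimension `dim (W₁ ∩ W₂) + 1`, and a projective space of
that dimension has `(q^{dim (W₁ ∩ W₂) + 1} - 1)/(q - 1)` points. This count is strictly increasing in
the dimension, so it equals `(q^e - 1)/(q - 1)` exactly when `dim (W₁ ∩ W₂) = e - 1 = dim W₂`. -/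

open Module Finset
open scoped LinearAlgebra.Projectivization

section ProjectivePoints

variable {K V : Type*} [Field K] [AddCommGroup V] [Module K V]

lemma projPts_inter (S T : Set V) : projPts K S ∩ projPts K T = projPts K (S ∩ T) := by
  ext P
  simp only [projPts, Set.mem_inter_iff, Set.mem_ofPred_eq, Set.subset_inter_iff]
  tauto

lemma range_submodule_map_subtype (U : Submodule K V) :
    Set.range (fun P : ℙ K U => P.submodule.map U.subtype) = projPts K (U : Set V) := by
  ext P
  simp only [Set.mem_range, projPts, Set.mem_ofPred_eq, SetLike.coe_subset_coe]
  constructor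
  · rintro ⟨P, rfl⟩
    exact ⟨by simp [P.finrank_submodule], Submodule.map_subtype_le U _⟩
  · rintro ⟨hP, hPU⟩
    have hcomap : finrank K (P.comap U.subtype) = 1 := by
      rwa [← Submodule.finrank_map_subtype_eq, Submodule.map_comap_subtype, inf_eq_right.2 hPU]
    refine ⟨.mk'' _ hcomap, ?_⟩
    rw [Projectivization.submodule_mk'', Submodule.map_comap_subtype, inf_eq_right.2 hPU]

lemma ncard_projPts_submodule [Finite K] (U : Submodule K V) :
    (projPts K (U : Set V)).ncard = ∑ i ∈ range (finrank K U), Nat.card K ^ i := by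
  have hinj : Function.Injective (fun P : ℙ K U => P.submodule.map U.subtype) :=
    (Submodule.map_injective_of_injective U.injective_subtype).comp
      Projectivization.submodule_injective
  rw [← range_submodule_map_subtype, Set.ncard_range_of_injective hinj,
    Projectivization.card_of_finrank K U rfl]

lemma finrank_inf_add_one_of_not_le [FiniteDimensional K V] {H W : Submodule K V}
    (hH : finrank K H + 1 = finrank K V) (hW : ¬ W ≤ H) :
    finrank K ↥(W ⊓ H) + 1 = finrank K W := by
  have hlt : finrank K H < finrank K ↥(W ⊔ H) :=
    Submodule.finrank_lt_finrank_of_lt (right_lt_sup.2 hW)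
  have hsup : W ⊔ H = ⊤ :=
    Submodule.eq_top_of_finrank_eq (le_antisymm (Submodule.finrank_le _) (by omega))
  have := Submodule.finrank_sup_add_finrank_inf_eq W H
  rw [hsup, finrank_top] at this
  omega

lemma le_iff_finrank_inf_eq [FiniteDimensional K V] {W₁ W₂ : Submodule K V} :
    W₂ ≤ W₁ ↔ finrank K ↥(W₁ ⊓ W₂) = finrank K W₂ :=
  ⟨fun h => by rw [inf_eq_right.2 h], fun h =>
    Submodule.eq_of_le_of_finrank_eq inf_le_right h ▸ inf_le_left⟩

lemma blockA_inter_blockB (σ : Submodule K V → Submodule K V) {H W B : Submodule K V}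
    (hB : σ B ≤ H) : blockA σ H W ∩ blockB σ B = projPts K ↑(σ (W ⊓ H) ⊓ σ B) := by
  have hdisj : ((W : Set V) \ H) ∩ σ B = ∅ :=
    Set.eq_empty_of_forall_notMem fun v hv => hv.1.2 (hB hv.2)
  rw [blockA, blockB, projPts_inter, Set.union_inter_distrib_right, hdisj, Set.union_empty,
    Submodule.coe_inf]

end ProjectivePoints

lemma geomSum_strictMono {q : ℕ} (hq : 1 ≤ q) : StrictMono (fun n => ∑ i ∈ range n, q ^ i) :=
  strictMono_nat_of_lt_succ fun n => by
    simp only [sum_range_succ]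
    have := Nat.one_le_pow n q hq
    omega

theorem stmt5_general (q e : ℕ) (he : 1 ≤ e)
    (K V : Type*) [Field K] [Fintype K] (hK : Fintype.card K = q)
    [AddCommGroup V] [Module K V] [FiniteDimensional K V]
    (hV : Module.finrank K V = 2 * e + 1)
    (H : Submodule K V) (hH : Module.finrank K ↥H = 2 * e)
    (σ : Submodule K V → Submodule K V)
    (hσle : ∀ W ≤ H, σ W ≤ H)
    (hσinf : ∀ W₁ W₂ : Submodule K V, W₁ ≤ H → W₂ ≤ H → σ W₁ ⊓ σ W₂ = σ (W₁ ⊔ W₂))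
    (hσrank : ∀ W ≤ H, Module.finrank K ↥(σ W) = 2 * e - Module.finrank K ↥W)
    (W₁ W₂ : Submodule K V) (hW₁ : W₁ ∈ setA e H) (hW₂ : W₂ ∈ setB e H) :
    (blockA σ H W₁ ∩ blockB σ W₂).ncard =
      (q ^ (Module.finrank K ↥(W₁ ⊓ W₂) + 1) - 1) / (q - 1) ∧
    ((blockA σ H W₁ ∩ blockB σ W₂).ncard = (q ^ e - 1) / (q - 1) ↔ W₂ ≤ W₁) := by
  obtain ⟨hW₁rank, hW₁H⟩ := hW₁
  obtain ⟨hW₂rank, hW₂H⟩ := hW₂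
  have hq : 2 ≤ q := hK ▸ Fintype.one_lt_card
  set m := finrank K ↥(W₁ ⊓ W₂)
  have hW₁Hrank : finrank K ↥(W₁ ⊓ H) + 1 = e + 1 :=
    hW₁rank ▸ finrank_inf_add_one_of_not_le (by omega) hW₁H
  have hm : m ≤ e - 1 := hW₂rank ▸ Submodule.finrank_mono inf_le_right
  have hsup : finrank K ↥(W₁ ⊓ H ⊔ W₂) + m = e + (e - 1) := by
    have hinf : W₁ ⊓ H ⊓ W₂ = W₁ ⊓ W₂ := by rw [inf_assoc, inf_eq_right.2 hW₂H]
    have := Submodule.finrank_sup_add_finrank_inf_eq (W₁ ⊓ H) W₂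
    rw [hinf] at this
    omega
  have hσsup : finrank K ↥(σ (W₁ ⊓ H ⊔ W₂)) = m + 1 := by
    rw [hσrank _ (sup_le inf_le_right hW₂H)]
    omega
  have hcard : (blockA σ H W₁ ∩ blockB σ W₂).ncard = ∑ i ∈ range (m + 1), q ^ i := by
    rw [blockA_inter_blockB σ (hσle W₂ hW₂H), hσinf _ _ inf_le_right hW₂H,
      ncard_projPts_submodule, hσsup, Nat.card_eq_fintype_card, hK]
  refine ⟨by rw [hcard, Nat.geomSum_eq hq], ?_⟩
  rw [hcard, ← Nat.geomSum_eq hq, (geomSum_strictMono (by omega)).injective.eq_iff,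
    le_iff_finrank_inf_eq, hW₂rank]
  omega

/-- For `W₁ ∈ 𝒜` and `W₂ ∈ ℬ`, the blocks `f(W₁) = [σ(W₁ ∩ H) ∪ (W₁ \ H)]`
and `f(W₂) = [σ(W₂)]` satisfy `|f(W₁) ∩ f(W₂)| = (q^{dim (W₁ ∩ W₂) + 1} - 1)/(q - 1)`;
consequently `|f(W₁) ∩ f(W₂)| = (q^e - 1)/(q - 1)` if and only if `W₂ ⊆ W₁`. -/
theorem stmt5 (q e : ℕ) (hq : ∃ p n : ℕ, p.Prime ∧ 0 < n ∧ q = p ^ n) (he : 1 ≤ e)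
    (K V : Type*) [Field K] [Fintype K] (hK : Fintype.card K = q)
    [AddCommGroup V] [Module K V] [FiniteDimensional K V]
    (hV : Module.finrank K V = 2 * e + 1)
    (H : Submodule K V) (hH : Module.finrank K ↥H = 2 * e)
    (σ : Submodule K V → Submodule K V)
    (hσle : ∀ W ≤ H, σ W ≤ H)
    (hσinv : ∀ W ≤ H, σ (σ W) = W)
    (hσanti : ∀ W₁ W₂ : Submodule K V, W₁ ≤ H → W₂ ≤ H → W₁ ≤ W₂ → σ W₂ ≤ σ W₁)
    (hσinf : ∀ W₁ W₂ : Submodule K V, W₁ ≤ H → W₂ ≤ H → σ W₁ ⊓ σ W₂ = σ (W₁ ⊔ W₂))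
    (hσrank : ∀ W ≤ H, Module.finrank K ↥(σ W) = 2 * e - Module.finrank K ↥W)
    (W₁ W₂ : Submodule K V) (hW₁ : W₁ ∈ setA e H) (hW₂ : W₂ ∈ setB e H) :
    (blockA σ H W₁ ∩ blockB σ W₂).ncard =
      (q ^ (Module.finrank K ↥(W₁ ⊓ W₂) + 1) - 1) / (q - 1) ∧
    ((blockA σ H W₁ ∩ blockB σ W₂).ncard = (q ^ e - 1) / (q - 1) ↔ W₂ ≤ W₁) :=
  stmt5_general q e he K V hK hV H hH σ hσle hσinf hσrank W₁ W₂ hW₁ hW₂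
end

section
/- Let φ ∈ ΓL(V)_H, let φ' be the permutation of [V] defined by φ'(⟨x⟩) = σφσ(⟨x⟩) if ⟨x⟩ ∈ [H] and φ'(⟨x⟩) = φ(⟨x⟩) otherwise, and let f be the map sending W ∈ 𝒜 to [σ(W∩H) ∪ (W∖H)] and W ∈ ℬ to [σ(W)]. Then f(φ(W)) = φ'(f(W)) for every W ∈ 𝒜 ∪ ℬ, where φ'(f(W)) denotes the image of the set f(W) ⊆ [V] under φ'. -/
/-- The image of a subspace `W` of `V` under a semilinear bijection `φ` of `V`
(an element of the general semilinear group `ΓL(V)`). -/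
def semimap {K V : Type*} [Field K] [AddCommGroup V] [Module K V]
    (τ : K ≃+* K) (φ : V ≃+ V)
    (hφ : ∀ (c : K) (x : V), φ (c • x) = τ c • φ x) (W : Submodule K V) :
    Submodule K V where
  carrier := φ '' (W : Set V)
  add_mem' := by
    rintro _ _ ⟨a, ha, rfl⟩ ⟨b, hb, rfl⟩
    exact ⟨a + b, W.add_mem ha hb, map_add φ a b⟩
  zero_mem' := ⟨0, W.zero_mem, map_zero φ⟩
  smul_mem' := by
    rintro c _ ⟨a, ha, rfl⟩
    exact ⟨τ.symm c • a, W.smul_mem _ ha, by rw [hφ, RingEquiv.apply_symm_apply]⟩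

open Classical in
/-- The permutation `φ'` of the projective points of `V` induced by `φ ∈ ΓL(V)_H`:
on points of `H` it acts as `σ φ σ`, elsewhere as `φ`. -/
noncomputable def phiMap {K V : Type*} [Field K] [AddCommGroup V] [Module K V]
    (σ : Submodule K V → Submodule K V) (H : Submodule K V)
    (τ : K ≃+* K) (φ : V ≃+ V)
    (hφ : ∀ (c : K) (x : V), φ (c • x) = τ c • φ x) (P : Submodule K V) : Submodule K V :=
  if P ≤ H then σ (semimap τ φ hφ (σ P)) else semimap τ φ hφ P

open Classical in
/-- The map `f` sending `W ∈ 𝒜` to `[σ(W ∩ H) ∪ (W \ H)]` and `W ∈ ℬ` to `[σ(W)]`. -/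
noncomputable def fJT {K V : Type*} [Field K] [AddCommGroup V] [Module K V]
    (σ : Submodule K V → Submodule K V) (e : ℕ) (H : Submodule K V)
    (W : Submodule K V) : Set (Submodule K V) :=
  if W ∈ setA e H then blockA σ H W else blockB σ W

/-!
`φ` acts on the subspace lattice as an order automorphism fixing `H` and preserving dimension.
On points of `H` its conjugate `σφσ` preserves incidence with polar subspaces:
`P ≤ σ U ↔ U ≤ σ P ↔ φ U ≤ φ (σ P) ↔ σ (φ (σ P)) ≤ σ (φ U)`; off `H`, `φ'` is `φ` itself.
Hence `P ∈ f W ↔ φ' P ∈ f (φ W)`, and since `φ'` is surjective (the map built from `φ⁻¹`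
inverts it), `f (φ W)` is the image of `f W`.
-/

section Semimap

variable {K V : Type*} [Field K] [AddCommGroup V] [Module K V] (τ : K ≃+* K) (φ : V ≃+ V)

lemma symm_apply_smul (hφ : ∀ (c : K) (x : V), φ (c • x) = τ c • φ x) (c : K) (x : V) :
    φ.symm (c • x) = τ.symm c • φ.symm x :=
  φ.injective (by rw [φ.apply_symm_apply, hφ, τ.apply_symm_apply, φ.apply_symm_apply])

variable (hφ : ∀ (c : K) (x : V), φ (c • x) = τ c • φ x)

lemma mem_semimap {W : Submodule K V} {x : V} : x ∈ semimap τ φ hφ W ↔ φ.symm x ∈ W :=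
  ⟨by rintro ⟨y, hy, rfl⟩; simpa using hy, fun h => ⟨φ.symm x, h, φ.apply_symm_apply x⟩⟩

def semimapOrderIso : Submodule K V ≃o Submodule K V where
  toFun := semimap τ φ hφ
  invFun := semimap τ.symm φ.symm (symm_apply_smul τ φ hφ)
  left_inv W := by ext x; simp [mem_semimap]
  right_inv W := by ext x; simp [mem_semimap]
  map_rel_iff' {W₁ W₂} := by
    refine ⟨fun h x hx => ?_, fun h _ hx => ?_⟩
    · have hφx : φ x ∈ semimap τ φ hφ W₁ := (mem_semimap τ φ hφ).2 (by simpa using hx)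
      simpa using (mem_semimap τ φ hφ).1 (h hφx)
    · exact (mem_semimap τ φ hφ).2 (h ((mem_semimap τ φ hφ).1 hx))

@[simp]
lemma semimapOrderIso_apply (W : Submodule K V) :
    semimapOrderIso τ φ hφ W = semimap τ φ hφ W :=
  rfl

lemma semimap_semimap_symm (W : Submodule K V) :
    semimap τ φ hφ (semimap τ.symm φ.symm (symm_apply_smul τ φ hφ) W) = W :=
  (semimapOrderIso τ φ hφ).apply_symm_apply W

lemma finrank_semimap (W : Submodule K V) :
    Module.finrank K (semimap τ φ hφ W) = Module.finrank K W := by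
  let j : W ≃+ semimap τ φ hφ W :=
    { toFun := fun x => ⟨φ x, x, x.2, rfl⟩
      invFun := fun y => ⟨φ.symm y, (mem_semimap τ φ hφ).1 y.2⟩
      left_inv := fun x => by simp
      right_inv := fun y => by simp
      map_add' := fun _ _ => by ext; simp }
  exact congrArg Cardinal.toNat
    (rank_eq_of_equiv_equiv τ j τ.bijective fun c x => Subtype.ext (hφ c x)).symm

variable {τ φ hφ} {H : Submodule K V}

lemma semimap_le_iff (hφH : semimap τ φ hφ H = H) {W : Submodule K V} :
    semimap τ φ hφ W ≤ H ↔ W ≤ H := by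
  have h := (semimapOrderIso τ φ hφ).le_iff_le (x := W) (y := H)
  rwa [semimapOrderIso_apply, semimapOrderIso_apply, hφH] at h

lemma semimap_inf (hφH : semimap τ φ hφ H = H) (W : Submodule K V) :
    semimap τ φ hφ (W ⊓ H) = semimap τ φ hφ W ⊓ H := by
  rw [← semimapOrderIso_apply, OrderIso.map_inf, semimapOrderIso_apply, semimapOrderIso_apply,
    hφH]

lemma semimap_symm_eq_self (hφH : semimap τ φ hφ H = H) :
    semimap τ.symm φ.symm (symm_apply_smul τ φ hφ) H = H :=
  (semimapOrderIso τ φ hφ).symm_apply_eq.2 hφH.symm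

lemma semimap_mem_setA_iff (hφH : semimap τ φ hφ H = H) {e : ℕ} {W : Submodule K V} :
    semimap τ φ hφ W ∈ setA e H ↔ W ∈ setA e H := by
  simp only [setA, Set.mem_ofPred_eq, finrank_semimap, semimap_le_iff hφH]

end Semimap

section Points

variable {K V : Type*} [Field K] [AddCommGroup V] [Module K V]

lemma inf_eq_bot_of_finrank_eq_one {P H : Submodule K V} (hP : Module.finrank K P = 1)
    (hPH : ¬ P ≤ H) : P ⊓ H = ⊥ := by
  have : FiniteDimensional K P := Module.finite_of_finrank_eq_succ hP
  have hlt : P ⊓ H < P := inf_le_left.lt_of_ne fun h => hPH (inf_eq_left.1 h)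
  have := Submodule.finrank_lt_finrank_of_lt hlt
  exact Submodule.finrank_eq_zero.1 (by omega)

lemma coe_subset_union_diff_iff_of_le {A W H P : Submodule K V} (hPH : P ≤ H) :
    (P : Set V) ⊆ A ∪ (W \ H) ↔ P ≤ A :=
  ⟨fun h _ hx => (h hx).resolve_right fun hx' => hx'.2 (hPH hx), fun h _ hx => Or.inl (h hx)⟩

lemma coe_subset_union_diff_iff_of_not_le {A W H P : Submodule K V} (hA : A ≤ H)
    (hP : Module.finrank K P = 1) (hPH : ¬ P ≤ H) : (P : Set V) ⊆ A ∪ (W \ H) ↔ P ≤ W := by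
  have hzero : ∀ x ∈ P, x ∈ H → x = 0 := fun x hx hxH => by
    simpa [inf_eq_bot_of_finrank_eq_one hP hPH] using Submodule.mem_inf.2 ⟨hx, hxH⟩
  refine ⟨fun h x hx => ?_, fun h x hx => ?_⟩
  · rcases h hx with hxA | hxW
    · rw [hzero x hx (hA hxA)]
      exact W.zero_mem
    · exact hxW.1
  · by_cases hxH : x ∈ H
    · rw [hzero x hx hxH]
      exact Or.inl A.zero_mem
    · exact Or.inr ⟨h hx, hxH⟩

end Points

section Polarity

variable {K V : Type*} [Field K] [AddCommGroup V] [Module K V]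
  {σ : Submodule K V → Submodule K V} {H : Submodule K V}

lemma le_sigma_comm (hσle : ∀ W ≤ H, σ W ≤ H) (hσinv : ∀ W ≤ H, σ (σ W) = W)
    (hσanti : ∀ W₁ W₂ : Submodule K V, W₁ ≤ H → W₂ ≤ H → W₁ ≤ W₂ → σ W₂ ≤ σ W₁)
    {P M : Submodule K V} (hP : P ≤ H) (hM : M ≤ H) : P ≤ σ M ↔ M ≤ σ P :=
  ⟨fun h => hσinv M hM ▸ hσanti _ _ hP (hσle M hM) h,
    fun h => hσinv P hP ▸ hσanti _ _ hM (hσle P hP) h⟩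

variable {τ : K ≃+* K} {φ : V ≃+ V} {hφ : ∀ (c : K) (x : V), φ (c • x) = τ c • φ x}

lemma phiMap_of_le {P : Submodule K V} (hP : P ≤ H) :
    phiMap σ H τ φ hφ P = σ (semimap τ φ hφ (σ P)) :=
  if_pos hP

lemma phiMap_of_not_le {P : Submodule K V} (hP : ¬ P ≤ H) :
    phiMap σ H τ φ hφ P = semimap τ φ hφ P :=
  if_neg hP

lemma phiMap_le_iff (hσle : ∀ W ≤ H, σ W ≤ H) (hφH : semimap τ φ hφ H = H)
    {P : Submodule K V} : phiMap σ H τ φ hφ P ≤ H ↔ P ≤ H := by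
  by_cases hP : P ≤ H
  · rw [phiMap_of_le hP]
    exact iff_of_true (hσle _ ((semimap_le_iff hφH).2 (hσle P hP))) hP
  · rw [phiMap_of_not_le hP, semimap_le_iff hφH]

lemma finrank_phiMap {n : ℕ} (hσle : ∀ W ≤ H, σ W ≤ H) (hσinv : ∀ W ≤ H, σ (σ W) = W)
    (hσrank : ∀ W ≤ H, Module.finrank K ↥(σ W) = n - Module.finrank K ↥W)
    (hφH : semimap τ φ hφ H = H) (P : Submodule K V) :
    Module.finrank K (phiMap σ H τ φ hφ P) = Module.finrank K P := by
  by_cases hP : P ≤ H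
  · have hσP := hσle P hP
    rw [phiMap_of_le hP, hσrank _ ((semimap_le_iff hφH).2 hσP), finrank_semimap,
      ← hσrank _ hσP, hσinv P hP]
  · rw [phiMap_of_not_le hP, finrank_semimap]

lemma phiMap_le_sigma_semimap_iff (hσle : ∀ W ≤ H, σ W ≤ H) (hσinv : ∀ W ≤ H, σ (σ W) = W)
    (hσanti : ∀ W₁ W₂ : Submodule K V, W₁ ≤ H → W₂ ≤ H → W₁ ≤ W₂ → σ W₂ ≤ σ W₁)
    (hφH : semimap τ φ hφ H = H) {P U : Submodule K V} (hP : P ≤ H) (hU : U ≤ H) :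
    phiMap σ H τ φ hφ P ≤ σ (semimap τ φ hφ U) ↔ P ≤ σ U := by
  have hψσP : semimap τ φ hφ (σ P) ≤ H := (semimap_le_iff hφH).2 (hσle P hP)
  rw [phiMap_of_le hP, le_sigma_comm hσle hσinv hσanti (hσle _ hψσP) ((semimap_le_iff hφH).2 hU),
    hσinv _ hψσP, ← semimapOrderIso_apply, ← semimapOrderIso_apply, OrderIso.le_iff_le]
  exact (le_sigma_comm hσle hσinv hσanti hP hU).symm

lemma phiMap_surjective (hσle : ∀ W ≤ H, σ W ≤ H) (hσinv : ∀ W ≤ H, σ (σ W) = W)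
    (hφH : semimap τ φ hφ H = H) : Function.Surjective (phiMap σ H τ φ hφ) := by
  intro Q
  have hφH' := semimap_symm_eq_self hφH
  refine ⟨phiMap σ H τ.symm φ.symm (symm_apply_smul τ φ hφ) Q, ?_⟩
  by_cases hQ : Q ≤ H
  · have h : semimap τ.symm φ.symm (symm_apply_smul τ φ hφ) (σ Q) ≤ H :=
      (semimap_le_iff hφH').2 (hσle Q hQ)
    rw [phiMap_of_le hQ, phiMap_of_le (hσle _ h), hσinv _ h, semimap_semimap_symm, hσinv Q hQ]
  · have h : ¬ semimap τ.symm φ.symm (symm_apply_smul τ φ hφ) Q ≤ H :=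
      mt (semimap_le_iff hφH').1 hQ
    rw [phiMap_of_not_le hQ, phiMap_of_not_le h, semimap_semimap_symm]

lemma phiMap_mem_blockA_iff {n : ℕ} (hσle : ∀ W ≤ H, σ W ≤ H)
    (hσinv : ∀ W ≤ H, σ (σ W) = W)
    (hσanti : ∀ W₁ W₂ : Submodule K V, W₁ ≤ H → W₂ ≤ H → W₁ ≤ W₂ → σ W₂ ≤ σ W₁)
    (hσrank : ∀ W ≤ H, Module.finrank K ↥(σ W) = n - Module.finrank K ↥W)
    (hφH : semimap τ φ hφ H = H) (P W : Submodule K V) :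
    phiMap σ H τ φ hφ P ∈ blockA σ H (semimap τ φ hφ W) ↔ P ∈ blockA σ H W := by
  simp only [blockA, projPts, Set.mem_ofPred_eq, finrank_phiMap hσle hσinv hσrank hφH]
  refine and_congr_right fun hP => ?_
  by_cases hPH : P ≤ H
  · rw [coe_subset_union_diff_iff_of_le hPH,
      coe_subset_union_diff_iff_of_le ((phiMap_le_iff hσle hφH).2 hPH), ← semimap_inf hφH,
      phiMap_le_sigma_semimap_iff hσle hσinv hσanti hφH hPH inf_le_right]
  · rw [coe_subset_union_diff_iff_of_not_le (hσle _ inf_le_right) hP hPH,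
      coe_subset_union_diff_iff_of_not_le (hσle _ inf_le_right)
        ((finrank_phiMap hσle hσinv hσrank hφH P).trans hP) (mt (phiMap_le_iff hσle hφH).1 hPH),
      phiMap_of_not_le hPH, ← semimapOrderIso_apply, ← semimapOrderIso_apply,
      OrderIso.le_iff_le]

lemma phiMap_mem_blockB_iff {n : ℕ} (hσle : ∀ W ≤ H, σ W ≤ H)
    (hσinv : ∀ W ≤ H, σ (σ W) = W)
    (hσanti : ∀ W₁ W₂ : Submodule K V, W₁ ≤ H → W₂ ≤ H → W₁ ≤ W₂ → σ W₂ ≤ σ W₁)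
    (hσrank : ∀ W ≤ H, Module.finrank K ↥(σ W) = n - Module.finrank K ↥W)
    (hφH : semimap τ φ hφ H = H) (P : Submodule K V) {W : Submodule K V} (hW : W ≤ H) :
    phiMap σ H τ φ hφ P ∈ blockB σ (semimap τ φ hφ W) ↔ P ∈ blockB σ W := by
  simp only [blockB, projPts, Set.mem_ofPred_eq, SetLike.coe_subset_coe,
    finrank_phiMap hσle hσinv hσrank hφH]
  refine and_congr_right fun _ => ?_
  by_cases hPH : P ≤ H
  · exact phiMap_le_sigma_semimap_iff hσle hσinv hσanti hφH hPH hW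
  · exact iff_of_false
      (fun h => hPH ((phiMap_le_iff hσle hφH).1 (h.trans (hσle _ ((semimap_le_iff hφH).2 hW)))))
      (fun h => hPH (h.trans (hσle W hW)))

lemma phiMap_mem_fJT_iff {n : ℕ} (hσle : ∀ W ≤ H, σ W ≤ H)
    (hσinv : ∀ W ≤ H, σ (σ W) = W)
    (hσanti : ∀ W₁ W₂ : Submodule K V, W₁ ≤ H → W₂ ≤ H → W₁ ≤ W₂ → σ W₂ ≤ σ W₁)
    (hσrank : ∀ W ≤ H, Module.finrank K ↥(σ W) = n - Module.finrank K ↥W)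
    (hφH : semimap τ φ hφ H = H) {e : ℕ} (P : Submodule K V) {W : Submodule K V}
    (hW : W ∈ setA e H ∪ setB e H) :
    phiMap σ H τ φ hφ P ∈ fJT σ e H (semimap τ φ hφ W) ↔ P ∈ fJT σ e H W := by
  rcases hW with hA | hB
  · rw [fJT, fJT, if_pos ((semimap_mem_setA_iff hφH).2 hA), if_pos hA]
    exact phiMap_mem_blockA_iff hσle hσinv hσanti hσrank hφH P W
  · have hnA : W ∉ setA e H := fun h => h.2 hB.2
    rw [fJT, fJT, if_neg (mt (semimap_mem_setA_iff hφH).1 hnA), if_neg hnA]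
    exact phiMap_mem_blockB_iff hσle hσinv hσanti hσrank hφH P hB.2

end Polarity

theorem stmt10_general (e : ℕ)
    (K V : Type*) [Field K]
    [AddCommGroup V] [Module K V]
    (H : Submodule K V)
    (σ : Submodule K V → Submodule K V)
    (hσle : ∀ W ≤ H, σ W ≤ H)
    (hσinv : ∀ W ≤ H, σ (σ W) = W)
    (hσanti : ∀ W₁ W₂ : Submodule K V, W₁ ≤ H → W₂ ≤ H → W₁ ≤ W₂ → σ W₂ ≤ σ W₁)
    (hσrank : ∀ W ≤ H, Module.finrank K ↥(σ W) = 2 * e - Module.finrank K ↥W)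
    (τ : K ≃+* K) (φ : V ≃+ V) (hφ : ∀ (c : K) (x : V), φ (c • x) = τ c • φ x)
    (hφH : semimap τ φ hφ H = H) :
    ∀ W ∈ setA e H ∪ setB e H,
      fJT σ e H (semimap τ φ hφ W) = phiMap σ H τ φ hφ '' fJT σ e H W := by
  intro W hW
  rw [← Set.image_preimage_eq (fJT σ e H (semimap τ φ hφ W))
    (phiMap_surjective hσle hσinv hφH)]
  congr 1
  ext P
  exact phiMap_mem_fJT_iff hσle hσinv hσanti hσrank hφH P hW

/-- For `φ ∈ ΓL(V)_H` with induced point permutation `φ'` and the block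
map `f`, one has `f(φ(W)) = φ'(f(W))` for every `W ∈ 𝒜 ∪ ℬ`, where `φ'(f(W))` is the image
of the point set `f(W)` under `φ'`. -/
theorem stmt10 (q e : ℕ) (hq : ∃ p n : ℕ, p.Prime ∧ 0 < n ∧ q = p ^ n) (he : 2 ≤ e)
    (K V : Type*) [Field K] [Fintype K] (hK : Fintype.card K = q)
    [AddCommGroup V] [Module K V] [FiniteDimensional K V]
    (hV : Module.finrank K V = 2 * e + 1)
    (H : Submodule K V) (hH : Module.finrank K ↥H = 2 * e)
    (σ : Submodule K V → Submodule K V)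
    (hσle : ∀ W ≤ H, σ W ≤ H)
    (hσinv : ∀ W ≤ H, σ (σ W) = W)
    (hσanti : ∀ W₁ W₂ : Submodule K V, W₁ ≤ H → W₂ ≤ H → W₁ ≤ W₂ → σ W₂ ≤ σ W₁)
    (hσinf : ∀ W₁ W₂ : Submodule K V, W₁ ≤ H → W₂ ≤ H → σ W₁ ⊓ σ W₂ = σ (W₁ ⊔ W₂))
    (hσrank : ∀ W ≤ H, Module.finrank K ↥(σ W) = 2 * e - Module.finrank K ↥W)
    (τ : K ≃+* K) (φ : V ≃+ V) (hφ : ∀ (c : K) (x : V), φ (c • x) = τ c • φ x)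
    (hφH : semimap τ φ hφ H = H) :
    ∀ W ∈ setA e H ∪ setB e H,
      fJT σ e H (semimap τ φ hφ W) = phiMap σ H τ φ hφ '' fJT σ e H W :=
  stmt10_general e K V H σ hσle hσinv hσanti hσrank τ φ hφ hφH
end
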